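/- arXiv:1512.03828 — 6 statements merged into one kernel-verified Lean document; each statement's English description precedes it below -/
import Mathlib

section
/- Let u : ℝ^m → [0,1] be any fuzzy set. Then the set D(u) := {α ∈ (0,1) : [u]_α ⊄ closure({u > α})} is at most countable, where [u]_α = {x : u(x) ≥ α} and {u > α} = {x : u(x) > α}. -/
open Set

theorem stmt8 {m : ℕ} (u : EuclideanSpace ℝ (Fin m) → ℝ)
    (hu : ∀ x, u x ∈ Icc (0:ℝ) 1) :
    Set.Countable
      {α ∈ Ioo (0:ℝ) 1 | ¬ {x | α ≤ u x} ⊆ closure {x | α < u x}} := by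
  classical
  obtain ⟨Dset, hDc, hDd⟩ :=
    TopologicalSpace.exists_countable_dense (EuclideanSpace ℝ (Fin m))
  set S := {α ∈ Ioo (0:ℝ) 1 | ¬ {x | α ≤ u x} ⊆ closure {x | α < u x}} with hS
  have key : ∀ α ∈ S, ∃ q ∈ Dset, ∃ s : ℚ,
      (∃ x, dist x q < (s:ℝ)/2 ∧ α ≤ u x) ∧
      (∀ y, dist y q < (s:ℝ)/2 → u y ≤ α) := by
    intro α hα
    obtain ⟨-, hnot⟩ := hα
    rw [not_subset] at hnot
    obtain ⟨x, hx, hxc⟩ := hnot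
    rw [Metric.mem_closure_iff] at hxc
    push_neg at hxc
    obtain ⟨ε, hε, hεball⟩ := hxc
    obtain ⟨s, hs0, hsε⟩ := exists_rat_btwn hε
    obtain ⟨q, hqD, hq⟩ := hDd.exists_dist_lt x (by positivity : (0:ℝ) < (s:ℝ)/2)
    refine ⟨q, hqD, s, ⟨x, hq, hx⟩, ?_⟩
    intro y hy
    by_contra hlt
    push_neg at hlt
    have hd : dist x y < ε := by
      calc dist x y ≤ dist x q + dist q y := dist_triangle _ _ _
        _ < (s:ℝ)/2 + (s:ℝ)/2 := by rw [dist_comm q y]; linarith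
        _ = (s:ℝ) := by ring
        _ < ε := hsε
    exact absurd (hεball y hlt) (not_le.mpr hd)
  choose! q hqD s hxs hys using key
  have hmaps : MapsTo (fun α => (q α, s α)) S (Dset ×ˢ (univ : Set ℚ)) := by
    intro α hα
    exact ⟨hqD α hα, trivial⟩
  have hinj : InjOn (fun α => (q α, s α)) S := by
    intro α hα β hβ h
    have hq : q α = q β := congrArg Prod.fst h
    have hs : s α = s β := congrArg Prod.snd h
    obtain ⟨xα, hxα, huα⟩ := hxs α hα
    obtain ⟨xβ, hxβ, huβ⟩ := hxs β hβ
    have h1 : β ≤ α := by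
      have := hys α hα xβ (by rw [hq, hs]; exact hxβ)
      linarith
    have h2 : α ≤ β := by
      have := hys β hβ xα (by rw [← hq, ← hs]; exact hxα)
      linarith
    linarith
  exact hmaps.countable_of_injOn hinj (hDc.prod countable_univ)
end

section
/- Let u : ℝ^m → [0,1] be upper semi-continuous. Then the set of platform points P(u) := {α ∈ (0,1) : closure({u > α}) is a proper subset of [u]_α} is at most countable. -/
open Set

theorem stmt9 {m : ℕ} (u : EuclideanSpace ℝ (Fin m) → ℝ)
    (hu : ∀ x, u x ∈ Icc (0:ℝ) 1) (husc : UpperSemicontinuous u) :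
    Set.Countable
      {α ∈ Ioo (0:ℝ) 1 | closure {x | α < u x} ⊂ {x | α ≤ u x}} := by
  obtain ⟨b, hbc, -, hbb⟩ :=
    TopologicalSpace.exists_countable_basis (EuclideanSpace ℝ (Fin m))
  set P := {α ∈ Ioo (0:ℝ) 1 | closure {x | α < u x} ⊂ {x | α ≤ u x}}
  have key : ∀ α ∈ P, ∃ t ∈ b, ∃ x ∈ t, α ≤ u x ∧ ∀ y ∈ t, u y ≤ α := by
    intro α hα
    obtain ⟨x, hx1, hx2⟩ := exists_of_ssubset hα.2
    obtain ⟨t, htb, hxt, hts⟩ := hbb.exists_subset_of_mem_open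
      (show x ∈ (closure {x | α < u x})ᶜ from hx2) isClosed_closure.isOpen_compl
    refine ⟨t, htb, x, hxt, hx1, ?_⟩
    intro y hy
    by_contra h
    exact hts hy (subset_closure (by simpa using lt_of_not_ge h))
  choose f hfb x hxf hxle hub using key
  classical
  have : Set.MapsTo (fun α => if h : α ∈ P then f α h else ∅) P b := by
    intro α hα; simp only [dif_pos hα]; exact hfb α hα
  refine this.countable_of_injOn ?_ hbc
  intro α hα β hβ hfeq
  simp only [dif_pos hα, dif_pos hβ] at hfeq
  have h1 : α ≤ β := le_trans (hxle α hα) (hub β hβ _ (hfeq ▸ hxf α hα))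
  have h2 : β ≤ α := le_trans (hxle β hβ) (hub α hα _ (hfeq ▸ hxf β hβ))
  exact le_antisymm h1 h2
end

section
/- Let u : ℝ^m → [0,1] be upper semi-continuous and α ∈ (0,1). Then for every sequence β_n → α with β_n < α for all n, the sets [u]_{β_n} Kuratowski-converge to [u]_α. -/
open Filter Metric EMetric Topology Set

/-- Kuratowski lower limit: points that are limits of sequences `x n ∈ C n`. -/
def setLiminf {X : Type*} [MetricSpace X] (C : ℕ → Set X) : Set X :=
  {x | ∃ f : ℕ → X, (∀ n, f n ∈ C n) ∧ Tendsto f atTop (𝓝 x)}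

/-- Kuratowski upper limit: points that are limits of sequences `x k ∈ C (φ k)` along a
subsequence `φ`. -/
def setLimsup {X : Type*} [MetricSpace X] (C : ℕ → Set X) : Set X :=
  {x | ∃ φ : ℕ → ℕ, StrictMono φ ∧ ∃ f : ℕ → X, (∀ k, f k ∈ C (φ k)) ∧ Tendsto f atTop (𝓝 x)}

theorem stmt11 {m : ℕ} (u : EuclideanSpace ℝ (Fin m) → ℝ)
    (hu : ∀ x, u x ∈ Icc (0:ℝ) 1) (husc : UpperSemicontinuous u)
    (α : ℝ) (hα : α ∈ Ioo (0:ℝ) 1)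
    (β : ℕ → ℝ) (hβ : ∀ n, β n < α) (hlim : Tendsto β atTop (𝓝 α)) :
    setLiminf (fun n => {x | β n ≤ u x}) = {x | α ≤ u x} ∧
      setLimsup (fun n => {x | β n ≤ u x}) = {x | α ≤ u x} := by
  have h1 : {x | α ≤ u x} ⊆ setLiminf (fun n => {x | β n ≤ u x}) := by
    intro x hx
    exact ⟨fun _ => x, fun n => le_trans (hβ n).le hx, tendsto_const_nhds⟩
  have h2 : setLiminf (fun n => {x | β n ≤ u x}) ⊆ setLimsup (fun n => {x | β n ≤ u x}) := by
    rintro x ⟨f, hf, hft⟩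
    exact ⟨id, strictMono_id, f, hf, hft⟩
  have h3 : setLimsup (fun n => {x | β n ≤ u x}) ⊆ {x | α ≤ u x} := by
    rintro x ⟨φ, hφ, f, hf, hft⟩
    by_contra hlt
    simp only [mem_setOf_eq, not_le] at hlt
    obtain ⟨c, hc1, hc2⟩ := exists_between hlt
    have hev2 : ∀ᶠ k in atTop, u (f k) < c := hft.eventually (husc x c hc1)
    have hβφ : Tendsto (β ∘ φ) atTop (𝓝 α) := hlim.comp hφ.tendsto_atTop
    have hev3 : ∀ᶠ k in atTop, c < β (φ k) := hβφ.eventually (eventually_gt_nhds hc2)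
    obtain ⟨k, hk1, hk2⟩ := (hev2.and hev3).exists
    exact absurd (hf k) (not_le.mpr (hk1.trans hk2))
  exact ⟨Subset.antisymm (h2.trans h3) h1, Subset.antisymm h3 (h1.trans h2)⟩
end

section
/- Let u : ℝ^m → [0,1] be upper semi-continuous with all cut-sets [u]_α compact for α ∈ (0,1], and let α ∈ (0,1) with [u]_α nonempty and such that there exists some β > α with [u]_β nonempty (or more generally α < λ_u where λ_u = sup{β : [u]_β ≠ ∅}). Then H([u]_β, closure({u>α})) → 0 as β → α from above, where H is the Hausdorff metric. -/
/-!
Every point of `K = closure {u > α}` lies within `ε` of some cut `[u]_β` with `β > α`. The sets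
of points within `ε` of `[u]_β` are open and grow as `β` decreases, so by compactness of `K`
finitely many, hence a single one, cover `K`; every later cut `[u]_β'` with `α < β' ≤ β` then
also has `K` in its `ε`-neighbourhood, while `[u]_β' ⊆ K` holds outright.
-/

open Filter Metric EMetric Topology Set

section

variable {X ι : Type*} [PseudoEMetricSpace X] [LinearOrder ι] [TopologicalSpace ι]
  [OrderTopology ι]

theorem IsCompact.eventually_forall_infEDist_lt {K : Set X} (hK : IsCompact K) {S : ι → Set X}
    (hS : Antitone S) {α : ι} (hKS : K ⊆ closure (⋃ β ∈ Ioi α, S β)) {ε : ENNReal}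
    (hε : 0 < ε) :
    ∀ᶠ β in 𝓝[>] α, ∀ x ∈ K, infEDist x (S β) < ε := by
  have hcover : K ⊆ ⋃ β : Ioi α, {x | infEDist x (S β) < ε} := by
    intro x hx
    have hx := hKS hx
    rw [mem_closure_iff_infEDist_zero, biUnion_eq_iUnion, infEDist_iUnion] at hx
    exact mem_iUnion.2 (iInf_lt_iff.1 (hx ▸ hε))
  obtain ⟨t, ht⟩ := hK.elim_finite_subcover _
    (fun β => isOpen_lt continuous_infEDist continuous_const) hcover
  have hsmall : ∀ᶠ β in 𝓝[>] α, ∀ b ∈ t, β ≤ (b : ι) :=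
    t.eventually_all.2 fun b _ => eventually_of_mem (Ioc_mem_nhdsGT b.2) fun _ h => h.2
  filter_upwards [hsmall] with β hβ x hx
  obtain ⟨b, hbt, hxb⟩ := mem_iUnion₂.1 (ht hx)
  exact (infEDist_anti (hS (hβ b hbt))).trans_lt hxb

theorem Antitone.tendsto_hausdorffEDist_closure_biUnion {S : ι → Set X} (hS : Antitone S)
    {α : ι} (hK : IsCompact (closure (⋃ β ∈ Ioi α, S β))) :
    Tendsto (fun β => hausdorffEDist (S β) (closure (⋃ β ∈ Ioi α, S β))) (𝓝[>] α) (𝓝 0) := by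
  refine ENNReal.tendsto_nhds_zero.2 fun ε hε => ?_
  filter_upwards [hK.eventually_forall_infEDist_lt hS subset_rfl hε, self_mem_nhdsWithin]
    with β hβ hαβ
  refine hausdorffEDist_le_of_infEDist (fun x hx => ?_) fun x hx => (hβ x hx).le
  exact (infEDist_zero_of_mem (subset_closure (mem_biUnion hαβ hx))).trans_le zero_le

end

theorem stmt12_general {m : ℕ} (u : EuclideanSpace ℝ (Fin m) → ℝ)
    (hcomp : ∀ α ∈ Ioc (0:ℝ) 1, IsCompact {x | α ≤ u x})
    (α : ℝ) (hα : α ∈ Ioo (0:ℝ) 1) :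
    Tendsto (fun β => hausdorffEdist {x | β ≤ u x} (closure {x | α < u x}))
      (𝓝[>] α) (𝓝 0) := by
  have hsuper : {x | α < u x} = ⋃ β ∈ Ioi α, {x | β ≤ u x} := by
    ext x
    simp only [mem_iUnion, mem_Ioi, exists_prop]
    exact ⟨fun h => ⟨u x, h, le_refl (u x)⟩, fun ⟨β, hαβ, hβ⟩ => hαβ.trans_le hβ⟩
  have hcut : IsCompact {x | α ≤ u x} := hcomp α (Ioo_subset_Ioc_self hα)
  have hK : IsCompact (closure {x | α < u x}) :=
    hcut.of_isClosed_subset isClosed_closure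
      (closure_minimal (ofPred_subset_ofPred.2 fun _ => le_of_lt) hcut.isClosed)
  have hanti : Antitone fun β => {x | β ≤ u x} := fun _ _ h _ hx => h.trans hx
  rw [hsuper] at hK ⊢
  exact hanti.tendsto_hausdorffEDist_closure_biUnion hK

theorem stmt12 {m : ℕ} (u : EuclideanSpace ℝ (Fin m) → ℝ)
    (hu : ∀ x, u x ∈ Icc (0:ℝ) 1) (husc : UpperSemicontinuous u)
    (hcomp : ∀ α ∈ Ioc (0:ℝ) 1, IsCompact {x | α ≤ u x})
    (α : ℝ) (hα : α ∈ Ioo (0:ℝ) 1)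
    (hne : {x | α ≤ u x}.Nonempty)
    (hbeta : ∃ β > α, {x | β ≤ u x}.Nonempty) :
    Tendsto (fun β => hausdorffEdist {x | β ≤ u x} (closure {x | α < u x}))
      (𝓝[>] α) (𝓝 0) :=
  stmt12_general u hcomp α hα
end

section
/- The set of compact star-shaped sets K_S(ℝ^m) is closed in the space of nonempty compact subsets of ℝ^m equipped with the Hausdorff metric: if K_n are compact star-shaped sets and H(K_n, K) → 0 for a nonempty compact K, then K is star-shaped. -/
/-!
Pick star centres `cₙ ∈ Kₙ`. They eventually lie in the compact set `cthickening 1 L`, so a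
subsequence converges to some `x`. Any limit of points `pₙ ∈ Kₙ` lies in `L`, which gives
`x ∈ L`; and for `y ∈ L`, approximating `y` by `zₙ ∈ Kₙ` along the subsequence, the points
`a • cₙ + b • zₙ ∈ Kₙ` converge to `a • x + b • y`, which therefore lies in `L`.
-/

open Filter Metric EMetric Topology Set

section HausdorffLimit

variable {α ι : Type*} [PseudoEMetricSpace α] {l : Filter ι} {K : ι → Set α} {L : Set α}

theorem tendsto_infEDist_of_tendsto_hausdorffEDist
    (h : Tendsto (fun i => hausdorffEDist (K i) L) l (𝓝 0)) {x : ι → α}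
    (hx : ∀ᶠ i in l, x i ∈ K i) : Tendsto (fun i => infEDist (x i) L) l (𝓝 0) :=
  tendsto_of_tendsto_of_tendsto_of_le_of_le' tendsto_const_nhds h
    (Eventually.of_forall fun _ => zero_le)
    (hx.mono fun _ hxi => infEDist_le_hausdorffEDist_of_mem hxi)

theorem mem_of_tendsto_hausdorffEDist [l.NeBot] (hL : IsClosed L)
    (h : Tendsto (fun i => hausdorffEDist (K i) L) l (𝓝 0)) {x : ι → α}
    (hx : ∀ᶠ i in l, x i ∈ K i) {a : α} (hxa : Tendsto x l (𝓝 a)) : a ∈ L := by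
  rw [← hL.closure_eq, mem_closure_iff_infEDist_zero]
  exact tendsto_nhds_unique ((continuous_infEDist.tendsto a).comp hxa)
    (tendsto_infEDist_of_tendsto_hausdorffEDist h hx)

theorem eventually_mem_cthickening_of_tendsto_hausdorffEDist
    (h : Tendsto (fun i => hausdorffEDist (K i) L) l (𝓝 0)) {x : ι → α}
    (hx : ∀ᶠ i in l, x i ∈ K i) {δ : ℝ} (hδ : 0 < δ) : ∀ᶠ i in l, x i ∈ cthickening δ L :=
  ((tendsto_infEDist_of_tendsto_hausdorffEDist h hx).eventually
    (ge_mem_nhds (ENNReal.ofReal_pos.2 hδ))).mono fun _ hi => mem_cthickening_iff.2 hi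

theorem exists_seq_tendsto_of_tendsto_hausdorffEDist {K : ℕ → Set α}
    (h : Tendsto (fun n => hausdorffEDist (K n) L) atTop (𝓝 0)) {y : α} (hy : y ∈ L) :
    ∃ z : ℕ → α, (∀ᶠ n in atTop, z n ∈ K n) ∧ Tendsto z atTop (𝓝 y) := by
  have hinf : Tendsto (fun n => infEDist y (K n)) atTop (𝓝 0) :=
    tendsto_of_tendsto_of_tendsto_of_le_of_le tendsto_const_nhds h (fun _ => zero_le)
      fun n => hausdorffEDist_comm (s := L) ▸ infEDist_le_hausdorffEDist_of_mem hy
  obtain ⟨N, hN⟩ := eventually_atTop.1 (hinf.eventually (gt_mem_nhds ENNReal.zero_lt_top))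
  have hnear : ∀ n ≥ N, ∃ z ∈ K n, edist y z < infEDist y (K n) + (n : ENNReal)⁻¹ := fun n hn =>
    infEDist_lt_iff.1 (ENNReal.lt_add_right (hN n hn).ne (ENNReal.inv_ne_zero.2 (by simp)))
  have : Nonempty α := ⟨y⟩
  choose! z hzK hzy using hnear
  refine ⟨z, eventually_atTop.2 ⟨N, hzK⟩, tendsto_iff_edist_tendsto_0.2 ?_⟩
  refine tendsto_of_tendsto_of_tendsto_of_le_of_le' tendsto_const_nhds
    (by simpa using hinf.add ENNReal.tendsto_inv_nat_nhds_zero)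
    (Eventually.of_forall fun _ => zero_le) (eventually_atTop.2 ⟨N, fun n hn => ?_⟩)
  rw [edist_comm]
  exact (hzy n hn).le

end HausdorffLimit

theorem stmt15_general {m : ℕ} (K : ℕ → Set (EuclideanSpace ℝ (Fin m)))
    (L : Set (EuclideanSpace ℝ (Fin m)))
    (hKstar : ∀ n, ∃ x ∈ K n, StarConvex ℝ x (K n))
    (hLc : IsCompact L)
    (h : Tendsto (fun n => hausdorffEdist (K n) L) atTop (𝓝 0)) :
    ∃ x ∈ L, StarConvex ℝ x L := by
  choose c hc hstar using hKstar
  obtain ⟨x, -, φ, hφ, hcx⟩ := (hLc.cthickening (r := 1)).tendsto_subseq'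
    (eventually_mem_cthickening_of_tendsto_hausdorffEDist h (Eventually.of_forall hc)
      one_pos).frequently
  have hφL : Tendsto (fun k => hausdorffEDist (K (φ k)) L) atTop (𝓝 0) :=
    h.comp hφ.tendsto_atTop
  refine ⟨x, mem_of_tendsto_hausdorffEDist hLc.isClosed hφL
    (Eventually.of_forall fun k => hc (φ k)) hcx, ?_⟩
  intro y hy a b ha hb hab
  obtain ⟨z, hzK, hzy⟩ := exists_seq_tendsto_of_tendsto_hausdorffEDist hφL hy
  exact mem_of_tendsto_hausdorffEDist hLc.isClosed hφL
    (hzK.mono fun k hk => hstar (φ k) hk ha hb hab) ((hcx.const_smul a).add (hzy.const_smul b))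

theorem stmt15 {m : ℕ} (K : ℕ → Set (EuclideanSpace ℝ (Fin m)))
    (L : Set (EuclideanSpace ℝ (Fin m)))
    (hKc : ∀ n, IsCompact (K n))
    (hKstar : ∀ n, ∃ x ∈ K n, StarConvex ℝ x (K n))
    (hLc : IsCompact L) (hLne : L.Nonempty)
    (h : Tendsto (fun n => hausdorffEdist (K n) L) atTop (𝓝 0)) :
    ∃ x ∈ L, StarConvex ℝ x L :=
  stmt15_general K L hKstar hLc h
end

section
/- Let C and C_n (n=1,2,...) be nonempty compact star-shaped subsets of ℝ^m with H(C_n, C) → 0. Then limsup_{n→∞} ker(C_n) ⊆ ker(C), where ker(K) = {x ∈ K : for all y ∈ K, the segment from x to y lies in K}. -/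
open Filter Metric EMetric Topology Set

/-- The kernel of a set: points from which every point of the set is visible. -/
def sker {m : ℕ} (K : Set (EuclideanSpace ℝ (Fin m))) : Set (EuclideanSpace ℝ (Fin m)) :=
  {x | x ∈ K ∧ StarConvex ℝ x K}

/-!
Along a subsequence `φ` on which kernel points `f k ∈ ker (C (φ k))` converge to `x`, Hausdorff
convergence makes `L` exactly the set of limits of sequences `g k ∈ C (φ k)`. For such a sequence
converging to `y ∈ L`, the points `a • f k + b • g k` lie in `C (φ k)` and converge to
`a • x + b • y`, so the segment from `x` to `y` lies in `L`.
-/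

section Hausdorff

variable {X : Type*} [MetricSpace X] {C : ℕ → Set X} {L : Set X}

theorem setLiminf_subset_of_tendsto_hausdorffEDist (hL : IsClosed L)
    (h : Tendsto (fun n => hausdorffEDist (C n) L) atTop (𝓝 0)) : setLiminf C ⊆ L := by
  rintro z ⟨g, hg, hgz⟩
  have hbound : ∀ n, infEDist z L ≤ edist z (g n) + hausdorffEDist (C n) L := fun n =>
    calc infEDist z L ≤ infEDist z (C n) + hausdorffEDist (C n) L :=
          infEDist_le_infEDist_add_hausdorffEDist
      _ ≤ edist z (g n) + hausdorffEDist (C n) L := by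
          gcongr
          exact infEDist_le_edist_of_mem (hg n)
  have hdist : Tendsto (fun n => edist z (g n)) atTop (𝓝 0) := by
    simpa only [edist_comm] using tendsto_iff_edist_tendsto_0.1 hgz
  have hsum : Tendsto (fun n => edist z (g n) + hausdorffEDist (C n) L) atTop (𝓝 0) := by
    simpa only [add_zero] using hdist.add h
  rw [mem_iff_infEDist_zero_of_closed hL]
  exact le_antisymm (ge_of_tendsto' hsum hbound) zero_le

theorem subset_setLiminf_of_tendsto_hausdorffEDist (hC : ∀ n, IsCompact (C n))
    (hCne : ∀ n, (C n).Nonempty)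
    (h : Tendsto (fun n => hausdorffEDist (C n) L) atTop (𝓝 0)) : L ⊆ setLiminf C := by
  intro y hy
  choose g hg hgy using fun n => (hC n).exists_infEDist_eq_edist (hCne n) y
  refine ⟨g, hg, tendsto_iff_edist_tendsto_0.2 ?_⟩
  refine tendsto_of_tendsto_of_tendsto_of_le_of_le tendsto_const_nhds h (fun _ => zero_le)
    fun n => ?_
  calc edist (g n) y = infEDist y (C n) := by rw [edist_comm, hgy]
    _ ≤ hausdorffEDist L (C n) := infEDist_le_hausdorffEDist_of_mem hy
    _ = hausdorffEDist (C n) L := hausdorffEDist_comm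

end Hausdorff

theorem starConvex_setLiminf {E : Type*} [NormedAddCommGroup E] [NormedSpace ℝ E]
    {C : ℕ → Set E} {f : ℕ → E} {x : E} (hf : ∀ n, StarConvex ℝ (f n) (C n))
    (hfx : Tendsto f atTop (𝓝 x)) : StarConvex ℝ x (setLiminf C) := by
  rintro y ⟨g, hg, hgy⟩ a b ha hb hab
  exact ⟨fun n => a • f n + b • g n, fun n => hf n (hg n) ha hb hab,
    (hfx.const_smul a).add (hgy.const_smul b)⟩

theorem stmt16_general {m : ℕ} (C : ℕ → Set (EuclideanSpace ℝ (Fin m)))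
    (L : Set (EuclideanSpace ℝ (Fin m)))
    (hCc : ∀ n, IsCompact (C n))
    (hLc : IsCompact L)
    (h : Tendsto (fun n => hausdorffEdist (C n) L) atTop (𝓝 0)) :
    setLimsup (fun n => sker (C n)) ⊆ sker L := by
  rintro x ⟨φ, hφ, f, hf, hfx⟩
  have hH : Tendsto (fun k => hausdorffEDist (C (φ k)) L) atTop (𝓝 0) :=
    h.comp hφ.tendsto_atTop
  have hliminf : setLiminf (C ∘ φ) = L :=
    (setLiminf_subset_of_tendsto_hausdorffEDist hLc.isClosed hH).antisymm
      (subset_setLiminf_of_tendsto_hausdorffEDist (fun k => hCc (φ k))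
        (fun k => ⟨f k, (hf k).1⟩) hH)
  have hx : x ∈ setLiminf (C ∘ φ) := ⟨f, fun k => (hf k).1, hfx⟩
  have hstar := starConvex_setLiminf (C := C ∘ φ) (fun k => (hf k).2) hfx
  rw [hliminf] at hx hstar
  exact ⟨hx, hstar⟩

theorem stmt16 {m : ℕ} (C : ℕ → Set (EuclideanSpace ℝ (Fin m)))
    (L : Set (EuclideanSpace ℝ (Fin m)))
    (hCc : ∀ n, IsCompact (C n)) (hCstar : ∀ n, ∃ x ∈ C n, StarConvex ℝ x (C n))
    (hLc : IsCompact L) (hLne : L.Nonempty)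
    (hLstar : ∃ x ∈ L, StarConvex ℝ x L)
    (h : Tendsto (fun n => hausdorffEdist (C n) L) atTop (𝓝 0)) :
    setLimsup (fun n => sker (C n)) ⊆ sker L :=
  stmt16_general C L hCc hLc h
end
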